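/- Let u(p) = 2a₁(x₁y₂+y₁x₂)X₁(p) + 2a₂(x₁x₂−y₁y₂)X₂(p). Then for all p ∈ S³: D(|u|²)(p)[u(p)] = 16 a₁a₂(a₁+a₂)·(x₁²+y₁²−x₂²−y₂²)(x₁y₂+y₁x₂)(x₁x₂−y₁y₂). Consequently, if a₁ ≠ −a₂ and a₁a₂ ≠ 0, then u is not localizable, and there exist no A ∈ O(4) and no KKPS field w with w(Ap) = A(u(p)) for all p ∈ S³. -/

import Mathlib

open RealInnerProductSpace

noncomputable section

/-- ℝ⁴ with coordinates (x₁,y₁,x₂,y₂) and the Euclidean inner product; S³ is the set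
of `p` with `‖p‖ = 1`. -/
abbrev E4 := EuclideanSpace ℝ (Fin 4)

/-- The linear map `J(x₁,y₁,x₂,y₂) = (−y₁,x₁,−y₂,x₂)`; its restriction to S³ is the
Hopf field ξ. -/
def Jm (p : E4) : E4 := WithLp.toLp 2 ![-p 1, p 0, -p 3, p 2]

/-- The linear map `J'(x₁,y₁,x₂,y₂) = (−y₁,x₁,y₂,−x₂)`; its restriction to S³ is the
anti-Hopf field ξ'. -/
def Jm' (p : E4) : E4 := WithLp.toLp 2 ![-p 1, p 0, p 3, -p 2]

/-- The frame field `X₁(p) = (−x₂,y₂,x₁,−y₁)`. -/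
def X1 (p : E4) : E4 := WithLp.toLp 2 ![-p 2, p 3, p 0, -p 1]

/-- The frame field `X₂(p) = (−y₂,−x₂,y₁,x₁)`. -/
def X2 (p : E4) : E4 := WithLp.toLp 2 ![-p 3, -p 2, p 1, p 0]

/-- Orthogonal projection onto the tangent space of S³ at `p`: `P_p(v) = v − ⟨p,v⟩p`. -/
def Pt (p v : E4) : E4 := v - ⟪p, v⟫ • p

/-- A (smooth) tangent field on S³: a smooth map `u : ℝ⁴ → ℝ⁴` with `⟨p, u p⟩ = 0`
for every `p ∈ S³`. -/
def IsTangentField (u : E4 → E4) : Prop :=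
  ContDiff ℝ (⊤ : ℕ∞) u ∧ ∀ p : E4, ‖p‖ = 1 → ⟪p, u p⟫ = 0

/-- Levi-Civita covariant derivative of the round metric: `(∇_u v)(p) = P_p(Dv(p)[u(p)])`. -/
def scov (u v : E4 → E4) (p : E4) : E4 := Pt p (fderiv ℝ v p (u p))

/-- Spherical gradient: `(grad f)(p) = P_p(∇f(p))`. -/
def sgrad (f : E4 → ℝ) (p : E4) : E4 := Pt p (gradient f p)

/-- Spherical divergence: `(div u)(p) = tr(Du(p)) − ⟨Du(p)[p], p⟩`. -/
def sdiv (u : E4 → E4) (p : E4) : ℝ :=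
  LinearMap.trace ℝ E4 (fderiv ℝ u p).toLinearMap - ⟪fderiv ℝ u p p, p⟫

/-- Spherical Laplacian with geometers' sign: `Δf = −div (grad f)`. -/
def slap (f : E4 → ℝ) (p : E4) : ℝ := - sdiv (sgrad f) p

/-- The transverse complex structure of the standard Sasakian structure on S³:
`φ_p(v) = Jv + ⟨v, Jp⟩p`. -/
def phiT (p v : E4) : E4 := Jm v + ⟪v, Jm p⟫ • p

/-- `u` is a steady Euler field on S³ with pressure `pr`: `div u = 0` on S³ and
`(∇_u u)(p) = −(grad pr)(p)` for all `p ∈ S³`. -/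
def IsSteadyEulerWithPressure (u : E4 → E4) (pr : E4 → ℝ) : Prop :=
  ∀ p : E4, ‖p‖ = 1 → sdiv u p = 0 ∧ scov u u p = - sgrad pr p

/-- `u` is a steady Euler field on S³, for some smooth pressure. -/
def IsSteadyEuler (u : E4 → E4) : Prop :=
  ∃ pr : E4 → ℝ, ContDiff ℝ (⊤ : ℕ∞) pr ∧ IsSteadyEulerWithPressure u pr

/-- A tangent field `u` is localizable if `D(|u|²)(p)[u(p)] = 0` for all `p ∈ S³`. -/
def IsLocalizable (u : E4 → E4) : Prop :=
  ∀ p : E4, ‖p‖ = 1 → fderiv ℝ (fun q => ⟪u q, u q⟫) p (u p) = 0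

/-- The function `q(p) = x₁² + y₁²`. -/
def qf (p : E4) : ℝ := p 0 ^ 2 + p 1 ^ 2

/-- The KKPS family: `u(p) = A(q(p))·Jp + B(q(p))·J'p`. -/
def kkps (A B : ℝ → ℝ) (p : E4) : E4 := A (qf p) • Jm p + B (qf p) • Jm' p

/-- Determinant of four vectors in ℝ⁴ (given as rows). -/
def det4 (a b c d : E4) : ℝ :=
  Matrix.det (Matrix.of ![(fun i => a i), (fun i => b i), (fun i => c i), (fun i => d i)])

/-- Cross product of tangent vectors at `p ∈ S³`: `⟨v ×_p w, z⟩ = det(p,v,w,z)`. -/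
def crossS (p v w : E4) : E4 := WithLp.toLp 2 (fun i => det4 p v w (WithLp.toLp 2 (Pi.single i 1)))

/-- `c` is the curl of the tangent field `u` on S³: `c` is a tangent field such that
`⟨(∇_v u)(p), w⟩ − ⟨(∇_w u)(p), v⟩ = ⟨c(p), v ×_p w⟩` for all tangent `v, w` at `p ∈ S³`
(with the orientation convention given by `det4`, for which `curl ξ = 2ξ`). -/
def IsCurlOf (u c : E4 → E4) : Prop :=
  IsTangentField c ∧
  ∀ p : E4, ‖p‖ = 1 → ∀ v w : E4, ⟪p, v⟫ = 0 → ⟪p, w⟫ = 0 →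
    ⟪Pt p (fderiv ℝ u p v), w⟫ - ⟪Pt p (fderiv ℝ u p w), v⟫ = ⟪c p, crossS p v w⟫

/-- The Sasakian KKPS ansatz on S³: `u(p) = F(ψ(p))·Jp + φ_p((grad (G∘ψ))(p))`. -/
def ansatz (ψ : E4 → ℝ) (F G : ℝ → ℝ) (p : E4) : E4 :=
  F (ψ p) • Jm p + phiT p (sgrad (fun q => G (ψ q)) p)

/-- The quartic polynomial `ψ_a`, a deformation of Nomizu's isoparametric polynomial. -/
def ψa (a : ℝ) (p : E4) : ℝ :=
  (1/2) * ((p 0 ^ 2 + p 1 ^ 2 + p 2 ^ 2 + p 3 ^ 2) ^ 2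
      + (p 0 ^ 2 + p 1 ^ 2 - p 2 ^ 2 - p 3 ^ 2) ^ 2)
    + 2 * a * ((p 0 ^ 2 - p 1 ^ 2) * (p 2 ^ 2 - p 3 ^ 2) + 4 * p 0 * p 1 * p 2 * p 3)

/-- The field `u_a(p) = F(ψ_a(p))·Jp + φ_p((grad ψ_a)(p))`. -/
def nomizuField (a : ℝ) (F : ℝ → ℝ) (p : E4) : E4 :=
  F (ψa a p) • Jm p + phiT p (sgrad (ψa a) p)

/-- The field `u(p) = 2a₁(x₁y₂+y₁x₂)·X₁(p) + 2a₂(x₁x₂−y₁y₂)·X₂(p)`. -/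
def abField (a₁ a₂ : ℝ) (p : E4) : E4 :=
  (2 * a₁ * (p 0 * p 3 + p 1 * p 2)) • X1 p + (2 * a₂ * (p 0 * p 2 - p 1 * p 3)) • X2 p

/-! Since `X₁`, `X₂` are orthogonal with `|X₁(p)| = |X₂(p)| = |p|`, one has
`|u|² = 4 (a₁² α² + a₂² β²) |p|²`, where `α = x₁y₂ + y₁x₂` and `β = x₁x₂ − y₁y₂`.
The field `u` is tangent, so `|p|²` is constant along it, while `Dα[u] = 2a₂βδ` and
`Dβ[u] = 2a₁αδ` with `δ = x₁² + y₁² − x₂² − y₂²`; this gives the formula, which does not vanish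
at `(2/3, 2/3, 1/3, 0)`.

For a KKPS field `w`, `|w|²` is a function of `q` and `|p|²`, both constant along `w`, so `w`
is localizable. For a tangent field, `D(|u|²)(p)[u(p)]` only depends on `|u|²` restricted to `S³`
(differentiate along a great circle), so localizability is transported by isometries. -/

section Sphere

variable {E F : Type*} [NormedAddCommGroup E] [InnerProductSpace ℝ E]
  [NormedAddCommGroup F] [NormedSpace ℝ F]

theorem fderiv_apply_eq_of_comp_eq {f g : E → F} {γ : ℝ → E} {v : E}
    (hf : DifferentiableAt ℝ f (γ 0)) (hg : DifferentiableAt ℝ g (γ 0))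
    (hγ : HasDerivAt γ v 0) (hfg : ∀ t, f (γ t) = g (γ t)) :
    fderiv ℝ f (γ 0) v = fderiv ℝ g (γ 0) v := by
  have hfγ := hf.hasFDerivAt.comp_hasDerivAt 0 hγ
  have hgγ := hg.hasFDerivAt.comp_hasDerivAt 0 hγ
  rw [show f ∘ γ = g ∘ γ from funext hfg] at hfγ
  exact hfγ.unique hgγ

theorem exists_hasDerivAt_sphere {p v : E} (hp : ‖p‖ = 1) (hv : ⟪p, v⟫ = 0) :
    ∃ γ : ℝ → E, γ 0 = p ∧ HasDerivAt γ v 0 ∧ ∀ t, ‖γ t‖ = 1 := by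
  rcases eq_or_ne v 0 with rfl | hv₀
  · exact ⟨fun _ => p, rfl, hasDerivAt_const _ _, fun _ => hp⟩
  set r := ‖v‖
  have hr : r ≠ 0 := norm_ne_zero_iff.mpr hv₀
  set e := r⁻¹ • v
  have hpe : ⟪p, e⟫ = 0 := by rw [real_inner_smul_right, hv, mul_zero]
  have hpp : ⟪p, p⟫ = 1 := by rw [real_inner_self_eq_norm_sq, hp, one_pow]
  have hee : ⟪e, e⟫ = 1 := by
    rw [real_inner_self_eq_norm_sq, norm_smul, norm_inv, norm_norm, inv_mul_cancel₀ hr, one_pow]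
  refine ⟨fun t => Real.cos (r * t) • p + Real.sin (r * t) • e, by simp, ?_, fun t => ?_⟩
  · have h := (((hasDerivAt_id (0 : ℝ)).const_mul r).cos.smul_const p).add
      (((hasDerivAt_id (0 : ℝ)).const_mul r).sin.smul_const e)
    convert h using 1
    · rfl
    · simp [e, smul_smul, hr]
  · have h2 : ‖Real.cos (r * t) • p + Real.sin (r * t) • e‖ ^ 2 = 1 := by
      rw [← real_inner_self_eq_norm_sq]
      simp only [inner_add_left, inner_add_right, real_inner_smul_left, real_inner_smul_right,
        hpp, hee, real_inner_comm p e, hpe]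
      linear_combination Real.cos_sq_add_sin_sq (r * t)
    exact (pow_eq_one_iff_of_nonneg (norm_nonneg _) two_ne_zero).mp h2

theorem fderiv_apply_eq_of_eqOn_sphere {f g : E → F} {p v : E}
    (hf : DifferentiableAt ℝ f p) (hg : DifferentiableAt ℝ g p)
    (hfg : ∀ q, ‖q‖ = 1 → f q = g q) (hp : ‖p‖ = 1) (hv : ⟪p, v⟫ = 0) :
    fderiv ℝ f p v = fderiv ℝ g p v := by
  obtain ⟨γ, rfl, hγ, hγ₁⟩ := exists_hasDerivAt_sphere hp hv
  exact fderiv_apply_eq_of_comp_eq hf hg hγ fun t => hfg _ (hγ₁ t)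

end Sphere

-- With `z₁ = x₁ + i y₁`, `z₂ = x₂ + i y₂`: `imProd = Im (z₁ z₂)` and `reProd = Re (z₁ z₂)`.
def imProd (q : E4) : ℝ := q 0 * q 3 + q 1 * q 2

def reProd (q : E4) : ℝ := q 0 * q 2 - q 1 * q 3

theorem hasFDerivAt_coord (i : Fin 4) (p : E4) :
    HasFDerivAt (fun q : E4 => q i) (EuclideanSpace.proj i : E4 →L[ℝ] ℝ) p :=
  (EuclideanSpace.proj i : E4 →L[ℝ] ℝ).hasFDerivAt

theorem fderiv_imProd_apply (p v : E4) :
    fderiv ℝ imProd p v = p 0 * v 3 + p 3 * v 0 + (p 1 * v 2 + p 2 * v 1) := by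
  have h : HasFDerivAt imProd _ p := ((hasFDerivAt_coord 0 p).mul (hasFDerivAt_coord 3 p)).add
    ((hasFDerivAt_coord 1 p).mul (hasFDerivAt_coord 2 p))
  rw [h.fderiv]
  simp

theorem fderiv_reProd_apply (p v : E4) :
    fderiv ℝ reProd p v = p 0 * v 2 + p 2 * v 0 - (p 1 * v 3 + p 3 * v 1) := by
  have h : HasFDerivAt reProd _ p := ((hasFDerivAt_coord 0 p).mul (hasFDerivAt_coord 2 p)).sub
    ((hasFDerivAt_coord 1 p).mul (hasFDerivAt_coord 3 p))
  rw [h.fderiv]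
  simp

theorem differentiable_imProd : Differentiable ℝ imProd := by
  unfold imProd; fun_prop

theorem differentiable_reProd : Differentiable ℝ reProd := by
  unfold reProd; fun_prop

theorem fderiv_qf_apply (p v : E4) : fderiv ℝ qf p v = 2 * (p 0 * v 0 + p 1 * v 1) := by
  have h : HasFDerivAt qf _ p := ((hasFDerivAt_coord 0 p).pow 2).add ((hasFDerivAt_coord 1 p).pow 2)
  rw [h.fderiv]
  simp only [add_apply, smul_apply, PiLp.proj_apply, smul_eq_mul, nsmul_eq_mul]
  ring

theorem differentiable_qf : Differentiable ℝ qf := by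
  unfold qf; fun_prop

section abField

variable (a₁ a₂ : ℝ)

theorem inner_abField_self (q : E4) :
    ⟪abField a₁ a₂ q, abField a₁ a₂ q⟫
      = 4 * (a₁ ^ 2 * imProd q ^ 2 + a₂ ^ 2 * reProd q ^ 2) * ‖q‖ ^ 2 := by
  simp only [abField, X1, X2, imProd, reProd, inner_self_eq_norm_sq_to_K, Real.ringHom_apply,
    EuclideanSpace.real_norm_sq_eq, PiLp.add_apply, PiLp.smul_apply, smul_eq_mul,
    Fin.sum_univ_four, Matrix.cons_val_zero, Matrix.cons_val_one, Matrix.cons_val]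
  ring

theorem inner_abField_eq_zero (p : E4) : ⟪p, abField a₁ a₂ p⟫ = 0 := by
  simp only [abField, X1, X2, PiLp.inner_apply, PiLp.add_apply, PiLp.smul_apply, smul_eq_mul,
    RCLike.inner_apply, Real.ringHom_apply, Fin.sum_univ_four, Matrix.cons_val_zero,
    Matrix.cons_val_one, Matrix.cons_val]
  ring

theorem fderiv_imProd_abField (p : E4) :
    fderiv ℝ imProd p (abField a₁ a₂ p)
      = 2 * a₂ * reProd p * (p 0 ^ 2 + p 1 ^ 2 - p 2 ^ 2 - p 3 ^ 2) := by
  simp only [fderiv_imProd_apply, abField, X1, X2, reProd, PiLp.add_apply, PiLp.smul_apply,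
    Matrix.cons_val, smul_eq_mul, Matrix.cons_val_zero, Matrix.cons_val_one]
  ring

theorem fderiv_reProd_abField (p : E4) :
    fderiv ℝ reProd p (abField a₁ a₂ p)
      = 2 * a₁ * imProd p * (p 0 ^ 2 + p 1 ^ 2 - p 2 ^ 2 - p 3 ^ 2) := by
  simp only [fderiv_reProd_apply, abField, X1, X2, imProd, PiLp.add_apply, PiLp.smul_apply,
    Matrix.cons_val, smul_eq_mul, Matrix.cons_val_zero, Matrix.cons_val_one]
  ring

theorem fderiv_inner_abField_self_apply_abField {p : E4} (hp : ‖p‖ = 1) :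
    fderiv ℝ (fun q => ⟪abField a₁ a₂ q, abField a₁ a₂ q⟫) p (abField a₁ a₂ p)
      = 16 * a₁ * a₂ * (a₁ + a₂) * (p 0 ^ 2 + p 1 ^ 2 - p 2 ^ 2 - p 3 ^ 2)
          * imProd p * reProd p := by
  have h : HasFDerivAt (fun q => 4 * (a₁ ^ 2 * imProd q ^ 2 + a₂ ^ 2 * reProd q ^ 2) * ‖q‖ ^ 2)
      _ p := ((((differentiable_imProd p).hasFDerivAt.pow 2).const_mul (a₁ ^ 2)).add
    (((differentiable_reProd p).hasFDerivAt.pow 2).const_mul (a₂ ^ 2)) |>.const_mul 4).mul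
    (hasStrictFDerivAt_norm_sq p).hasFDerivAt
  rw [funext (inner_abField_self a₁ a₂), h.fderiv]
  simp only [add_apply, smul_apply, innerSL_apply_apply,
    fderiv_imProd_abField, fderiv_reProd_abField, inner_abField_eq_zero, hp, smul_eq_mul,
    nsmul_eq_mul]
  ring

theorem differentiable_inner_abField_self :
    Differentiable ℝ fun q => ⟪abField a₁ a₂ q, abField a₁ a₂ q⟫ := by
  have := differentiable_imProd
  have := differentiable_reProd
  have : Differentiable ℝ fun q : E4 => ‖q‖ ^ 2 := differentiable_id.norm_sq ℝ
  rw [funext (inner_abField_self a₁ a₂)]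
  fun_prop

theorem not_isLocalizable_abField (hsum : a₁ + a₂ ≠ 0) (hprod : a₁ * a₂ ≠ 0) :
    ¬ IsLocalizable (abField a₁ a₂) := by
  intro h
  let p : E4 := WithLp.toLp 2 ![2 / 3, 2 / 3, 1 / 3, 0]
  have hp : ‖p‖ = 1 := by
    rw [EuclideanSpace.norm_eq]
    norm_num [p, Fin.sum_univ_four, Matrix.cons_val_two, Matrix.cons_val_three, Matrix.tail_cons,
      Matrix.head_cons]
  have h₀ := (fderiv_inner_abField_self_apply_abField a₁ a₂ hp).symm.trans (h p hp)
  norm_num [p, imProd, reProd, Matrix.cons_val_two, Matrix.cons_val_three, Matrix.tail_cons,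
    Matrix.head_cons] at h₀
  exact h₀.elim (fun h => hprod (mul_eq_zero.mpr h)) hsum

end abField

section kkps

variable {A B : ℝ → ℝ}

theorem inner_kkps_self (q : E4) :
    ⟪kkps A B q, kkps A B q⟫
      = (A (qf q) ^ 2 + B (qf q) ^ 2) * ‖q‖ ^ 2
        + 2 * A (qf q) * B (qf q) * (2 * qf q - ‖q‖ ^ 2) := by
  simp only [kkps, qf, Jm, Jm', inner_self_eq_norm_sq_to_K, Real.ringHom_apply,
    EuclideanSpace.real_norm_sq_eq, PiLp.add_apply, PiLp.smul_apply, smul_eq_mul,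
    Fin.sum_univ_four, Matrix.cons_val_zero, Matrix.cons_val_one, Matrix.cons_val]
  ring

theorem inner_kkps_eq_zero (p : E4) : ⟪p, kkps A B p⟫ = 0 := by
  simp only [kkps, Jm, Jm', PiLp.inner_apply, PiLp.add_apply, PiLp.smul_apply, smul_eq_mul,
    RCLike.inner_apply, Real.ringHom_apply, Fin.sum_univ_four, Matrix.cons_val_zero,
    Matrix.cons_val_one, Matrix.cons_val]
  ring

theorem fderiv_qf_kkps (p : E4) : fderiv ℝ qf p (kkps A B p) = 0 := by
  simp only [fderiv_qf_apply, kkps, Jm, Jm', PiLp.add_apply, PiLp.smul_apply, smul_eq_mul,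
    Matrix.cons_val_zero, Matrix.cons_val_one]
  ring

theorem differentiable_inner_kkps_self (hA : Differentiable ℝ A) (hB : Differentiable ℝ B) :
    Differentiable ℝ fun q => ⟪kkps A B q, kkps A B q⟫ := by
  have := differentiable_qf
  have : Differentiable ℝ fun q : E4 => ‖q‖ ^ 2 := differentiable_id.norm_sq ℝ
  rw [funext inner_kkps_self]
  fun_prop

theorem isLocalizable_kkps (hA : Differentiable ℝ A) (hB : Differentiable ℝ B) :
    IsLocalizable (kkps A B) := by
  intro p _
  have hA' := (hA (qf p)).hasDerivAt.comp_hasFDerivAt p (differentiable_qf p).hasFDerivAt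
  have hB' := (hB (qf p)).hasDerivAt.comp_hasFDerivAt p (differentiable_qf p).hasFDerivAt
  have hN := (hasStrictFDerivAt_norm_sq p).hasFDerivAt
  have h : HasFDerivAt (fun q => (A (qf q) ^ 2 + B (qf q) ^ 2) * ‖q‖ ^ 2
      + 2 * A (qf q) * B (qf q) * (2 * qf q - ‖q‖ ^ 2)) _ p :=
    (((hA'.pow 2).add (hB'.pow 2)).mul hN).add
      ((((hA'.const_mul 2).mul hB').mul
        (((differentiable_qf p).hasFDerivAt.const_mul 2).sub hN)))
  rw [funext inner_kkps_self, h.fderiv]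
  simp [fderiv_qf_kkps, inner_kkps_eq_zero]

end kkps

theorem IsLocalizable.of_linearIsometryEquiv {u w : E4 → E4} (hw : IsLocalizable w)
    (Φ : E4 ≃ₗᵢ[ℝ] E4) (hwu : ∀ p, ‖p‖ = 1 → w (Φ p) = Φ (u p))
    (hu : ∀ p, ‖p‖ = 1 → ⟪p, u p⟫ = 0)
    (hu' : Differentiable ℝ fun q => ⟪u q, u q⟫) (hw' : Differentiable ℝ fun q => ⟪w q, w q⟫) :
    IsLocalizable u := by
  intro p hp
  have hΦp : ‖Φ p‖ = 1 := by rw [Φ.norm_map, hp]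
  calc fderiv ℝ (fun q => ⟪u q, u q⟫) p (u p)
      = fderiv ℝ ((fun q => ⟪w q, w q⟫) ∘ Φ) p (u p) := by
        refine fderiv_apply_eq_of_eqOn_sphere (hu' p)
          ((hw' _).comp p Φ.toContinuousLinearEquiv.differentiableAt) (fun q hq => ?_) hp (hu p hp)
        simp [hwu q hq]
    _ = fderiv ℝ (fun q => ⟪w q, w q⟫) (Φ p) (w (Φ p)) := by
        rw [show ⇑Φ = ⇑Φ.toContinuousLinearEquiv from rfl,
          ContinuousLinearEquiv.comp_right_fderiv]
        simp [hwu p hp]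
    _ = 0 := hw _ hΦp

/-- for `u = 2a₁(x₁y₂+y₁x₂)X₁ + 2a₂(x₁x₂−y₁y₂)X₂` one has, on S³,
`D(|u|²)(p)[u(p)] = 16a₁a₂(a₁+a₂)(x₁²+y₁²−x₂²−y₂²)(x₁y₂+y₁x₂)(x₁x₂−y₁y₂)`; hence if
`a₁ ≠ −a₂` and `a₁a₂ ≠ 0` then `u` is not localizable and is not isometric to any KKPS
field. -/
theorem statement18 (a₁ a₂ : ℝ) :
    (∀ p : E4, ‖p‖ = 1 →
      fderiv ℝ (fun q => ⟪abField a₁ a₂ q, abField a₁ a₂ q⟫) p (abField a₁ a₂ p)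
        = 16 * a₁ * a₂ * (a₁ + a₂) * (p 0 ^ 2 + p 1 ^ 2 - p 2 ^ 2 - p 3 ^ 2)
            * (p 0 * p 3 + p 1 * p 2) * (p 0 * p 2 - p 1 * p 3)) ∧
    (a₁ ≠ -a₂ → a₁ * a₂ ≠ 0 →
      ¬ IsLocalizable (abField a₁ a₂) ∧
      ¬ ∃ (Φ : E4 ≃ₗᵢ[ℝ] E4) (A B : ℝ → ℝ), ContDiff ℝ (⊤ : ℕ∞) A ∧ ContDiff ℝ (⊤ : ℕ∞) B ∧
          ∀ p : E4, ‖p‖ = 1 → kkps A B (Φ p) = Φ (abField a₁ a₂ p)) := by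
  refine ⟨fun p hp => fderiv_inner_abField_self_apply_abField a₁ a₂ hp, fun hne hprod => ?_⟩
  have hsum : a₁ + a₂ ≠ 0 := fun h => hne (eq_neg_of_add_eq_zero_left h)
  have hnot := not_isLocalizable_abField a₁ a₂ hsum hprod
  refine ⟨hnot, ?_⟩
  rintro ⟨Φ, A, B, hA, hB, hΦ⟩
  have hA' := hA.differentiable (by simp)
  have hB' := hB.differentiable (by simp)
  exact hnot <| (isLocalizable_kkps hA' hB').of_linearIsometryEquiv Φ hΦ
    (fun p _ => inner_abField_eq_zero a₁ a₂ p) (differentiable_inner_abField_self a₁ a₂)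
    (differentiable_inner_kkps_self hA' hB')
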